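/- arXiv:1608.08080 — 9 statements merged into one kernel-verified Lean document; each statement's English description precedes it below -/
import Mathlib

section
/- In a multi-urn search model, for every subset U ⊆ V and all draw counts x : V → ℕ with x_i ≤ N_i, one has R_U(x) = (∏_{i ∈ U} (1 − x_i/N_i)) · ∑_{S : U ⊆ S ⊆ V} (−1)^{|S|−|U|} φ_S ∏_{j ∈ S∖U} (x_j/N_j). Consequently, if Q(x) > 0, the conditional probability that every urn in U contains a red marble given that no red marble has been drawn satisfies R_U(x)/Q(x) = [(∏_{i ∈ U} (1 − x_i/N_i)) · ∑_{S : U ⊆ S ⊆ V} (−1)^{|S|−|U|} φ_S ∏_{j ∈ S∖U} (x_j/N_j)] / [∑_{S ⊆ V} (−1)^{|S|} φ_S ∏_{j ∈ S} (x_j/N_j)]. -/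
/-!
Write `p j = x j / N j`. By inclusion–exclusion, `∏ j ∈ T \ U, (1 - p j)` is a signed sum over the
sets `S` with `U ⊆ S ⊆ T`. Multiplying by `μ T`, summing over `T ⊇ U` and exchanging the two sums
makes `∑ T ⊇ S, μ T = φ_S` the coefficient of each `S`. The formula for `Q` is the case `U = ∅`.
-/

open Finset

variable {V : Type*} [Fintype V] [DecidableEq V]

/-- `phi μ U` is the probability that every urn in `U` contains a red marble:
the sum of `μ T` over all `T ⊇ U`. -/
noncomputable def phi (μ : Finset V → ℝ) (U : Finset V) : ℝ :=
  ∑ T ∈ univ.filter (fun T => U ⊆ T), μ T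

/-- `Qfun N μ x` is the probability that no red marble appears among the first
`x i` randomly drawn marbles of each urn `i`. -/
noncomputable def Qfun (N : V → ℕ) (μ : Finset V → ℝ) (x : V → ℕ) : ℝ :=
  ∑ T : Finset V, μ T * ∏ i ∈ T, (1 - (x i : ℝ) / (N i : ℝ))

/-- `Rfun N μ U x` is the probability that no red marble has been drawn and every
urn in `U` contains a red marble. -/
noncomputable def Rfun (N : V → ℕ) (μ : Finset V → ℝ) (U : Finset V) (x : V → ℕ) : ℝ :=
  ∑ T ∈ univ.filter (fun T => U ⊆ T), μ T * ∏ i ∈ T, (1 - (x i : ℝ) / (N i : ℝ))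

section InclusionExclusion

variable {ι R : Type*} [DecidableEq ι] [CommRing R]

theorem prod_one_sub_sdiff_eq_sum_Icc (p : ι → R) {U T : Finset ι} (hUT : U ⊆ T) :
    ∏ j ∈ T \ U, (1 - p j) = ∑ S ∈ Icc U T, (-1) ^ (#S - #U) * ∏ j ∈ S \ U, p j := by
  have disjoint_of_mem {B : Finset ι} (hB : B ∈ (T \ U).powerset) : Disjoint U B :=
    disjoint_of_subset_right (mem_powerset.1 hB) disjoint_sdiff
  rw [Icc_eq_image_powerset hUT, prod_sub, sum_image]
  · refine sum_congr rfl fun B hB => ?_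
    rw [union_sdiff_cancel_left (disjoint_of_mem hB), card_union_of_disjoint (disjoint_of_mem hB),
      Nat.add_sub_cancel_left, prod_const_one, mul_one]
  · intro B hB B' hB' h
    rw [← union_sdiff_cancel_left (disjoint_of_mem hB),
      ← union_sdiff_cancel_left (disjoint_of_mem hB')]
    exact congrArg (· \ U) h

theorem sum_superset_mul_prod_one_sub [Fintype ι] (μ : Finset ι → R) (p : ι → R) (U : Finset ι) :
    ∑ T ∈ univ.filter (fun T => U ⊆ T), μ T * ∏ i ∈ T, (1 - p i) =
      (∏ i ∈ U, (1 - p i)) * ∑ S ∈ univ.filter (fun S => U ⊆ S),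
        (-1) ^ (#S - #U) * (∑ T ∈ univ.filter (fun T => S ⊆ T), μ T) * ∏ j ∈ S \ U, p j := by
  calc ∑ T ∈ univ.filter (fun T => U ⊆ T), μ T * ∏ i ∈ T, (1 - p i)
      = (∏ i ∈ U, (1 - p i)) * ∑ T ∈ univ.filter (fun T => U ⊆ T), ∑ S ∈ Icc U T,
          μ T * ((-1) ^ (#S - #U) * ∏ j ∈ S \ U, p j) := by
        rw [mul_sum]
        refine sum_congr rfl fun T hT => ?_
        have hUT : U ⊆ T := (mem_filter.1 hT).2
        rw [← prod_sdiff hUT, prod_one_sub_sdiff_eq_sum_Icc p hUT, ← mul_sum]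
        ring
    _ = (∏ i ∈ U, (1 - p i)) * ∑ S ∈ univ.filter (fun S => U ⊆ S),
          ∑ T ∈ univ.filter (fun T => S ⊆ T), μ T * ((-1) ^ (#S - #U) * ∏ j ∈ S \ U, p j) := by
        congr 1
        refine sum_comm' fun T S => ?_
        simp only [mem_filter, mem_univ, true_and, mem_Icc]
        exact ⟨fun ⟨_, hUS, hST⟩ => ⟨hST, hUS⟩, fun ⟨hST, hUS⟩ => ⟨hUS.trans hST, hUS, hST⟩⟩
    _ = _ := by
        congr 1
        refine sum_congr rfl fun S _ => ?_
        rw [← sum_mul]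
        ring

end InclusionExclusion

theorem urn_probabilities_general (N : V → ℕ) (μ : Finset V → ℝ) (U : Finset V) (x : V → ℕ) :
    Rfun N μ U x =
      (∏ i ∈ U, (1 - (x i : ℝ) / (N i : ℝ))) *
        ∑ S ∈ univ.filter (fun S => U ⊆ S),
          (-1 : ℝ) ^ (S.card - U.card) * phi μ S * ∏ j ∈ S \ U, (x j : ℝ) / (N j : ℝ) ∧
    (0 < Qfun N μ x →
      Rfun N μ U x / Qfun N μ x =
        ((∏ i ∈ U, (1 - (x i : ℝ) / (N i : ℝ))) *
            ∑ S ∈ univ.filter (fun S => U ⊆ S),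
              (-1 : ℝ) ^ (S.card - U.card) * phi μ S * ∏ j ∈ S \ U, (x j : ℝ) / (N j : ℝ)) /
          (∑ S : Finset V, (-1 : ℝ) ^ S.card * phi μ S * ∏ j ∈ S, (x j : ℝ) / (N j : ℝ))) := by
  have hR (W : Finset V) := sum_superset_mul_prod_one_sub μ (fun i => (x i : ℝ) / (N i : ℝ)) W
  have hQ : Qfun N μ x =
      ∑ S : Finset V, (-1 : ℝ) ^ S.card * phi μ S * ∏ j ∈ S, (x j : ℝ) / (N j : ℝ) := by
    simpa only [Qfun, phi, empty_subset, filter_true, prod_empty, one_mul, card_empty, Nat.sub_zero,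
      sdiff_empty] using hR ∅
  exact ⟨hR U, fun _ => by rw [Rfun, hR U, hQ]; rfl⟩

/-- **Urn Probabilities** (Theorem 1 of the paper). -/
theorem urn_probabilities (N : V → ℕ) (hN : ∀ i, 1 ≤ N i)
    (μ : Finset V → ℝ) (hμ0 : ∀ T, 0 ≤ μ T) (hμ1 : ∑ T : Finset V, μ T = 1)
    (U : Finset V) (x : V → ℕ) (hx : ∀ i, x i ≤ N i) :
    Rfun N μ U x =
      (∏ i ∈ U, (1 - (x i : ℝ) / (N i : ℝ))) *
        ∑ S ∈ univ.filter (fun S => U ⊆ S),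
          (-1 : ℝ) ^ (S.card - U.card) * phi μ S * ∏ j ∈ S \ U, (x j : ℝ) / (N j : ℝ) ∧
    (0 < Qfun N μ x →
      Rfun N μ U x / Qfun N μ x =
        ((∏ i ∈ U, (1 - (x i : ℝ) / (N i : ℝ))) *
            ∑ S ∈ univ.filter (fun S => U ⊆ S),
              (-1 : ℝ) ^ (S.card - U.card) * phi μ S * ∏ j ∈ S \ U, (x j : ℝ) / (N j : ℝ)) /
          (∑ S : Finset V, (-1 : ℝ) ^ S.card * phi μ S * ∏ j ∈ S, (x j : ℝ) / (N j : ℝ))) :=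
  urn_probabilities_general N μ U x
end

section
/- In a multi-urn search model, suppose x : V → ℕ satisfies x_i ≤ N_i for all i, x_u < N_u for a given urn u, and Q(x) > 0, and let x' := x + e_u (the counts after one more draw from urn u). Then P(w(x,u)=1) = (1/N_u) · [∑_{S ⊆ V : u ∈ S} (−1)^{|S|−1} φ_S ∏_{i ∈ S∖{u}} (x_i/N_i)] / [∑_{S ⊆ V} (−1)^{|S|} φ_S ∏_{i ∈ S} (x_i/N_i)], and P(w(x,u)=0) = [∑_{S ⊆ V} (−1)^{|S|} φ_S ∏_{i ∈ S} (x'_i/N_i)] / [∑_{S ⊆ V} (−1)^{|S|} φ_S ∏_{i ∈ S} (x_i/N_i)]. -/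
open Finset

variable {V : Type*} [Fintype V] [DecidableEq V]

/-- Conditional probability that the next marble drawn from urn `u` is red. -/
noncomputable def Pw1 (N : V → ℕ) (μ : Finset V → ℝ) (x : V → ℕ) (u : V) : ℝ :=
  (1 / ((N u : ℝ) - (x u : ℝ))) * (Rfun N μ {u} x / Qfun N μ x)

/-- Conditional probability that the next marble drawn from urn `u` is blue. -/
noncomputable def Pw0 (N : V → ℕ) (μ : Finset V → ℝ) (x : V → ℕ) (u : V) : ℝ :=
  1 - Pw1 N μ x u

set_option linter.unusedSectionVars false

lemma swap_sum (μ g : Finset V → ℝ) :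
    ∑ T : Finset V, ∑ S ∈ T.powerset, μ T * g S
      = ∑ S : Finset V, phi μ S * g S := by
  have hp : ∀ T : Finset V, T.powerset = univ.filter (fun S => S ⊆ T) := fun T => by
    ext S; simp
  simp only [hp, sum_filter]
  rw [Finset.sum_comm]
  refine Finset.sum_congr rfl fun S _ => ?_
  rw [phi, sum_filter, sum_mul]
  exact Finset.sum_congr rfl fun T _ => by split <;> simp

lemma prod_one_sub (a : V → ℝ) (T : Finset V) :
    ∏ i ∈ T, (1 - a i) = ∑ S ∈ T.powerset, (-1:ℝ)^S.card * ∏ i ∈ S, a i := by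
  have h : ∀ i ∈ T, (1 - a i) = (-a i) + 1 := fun i _ => by ring
  rw [Finset.prod_congr rfl h, Finset.prod_add]
  refine Finset.sum_congr rfl fun S hS => ?_
  have : ∀ i ∈ S, -a i = (-1:ℝ) * a i := fun i _ => by ring
  rw [Finset.prod_congr rfl this, Finset.prod_mul_distrib, Finset.prod_const]
  simp

lemma prod_one_sub_mem (a : V → ℝ) (u : V) (T : Finset V) :
    (if u ∈ T then ∏ i ∈ T \ {u}, (1 - a i) else 0)
      = ∑ S ∈ T.powerset,
          (if u ∈ S then (-1:ℝ)^(S.card - 1) * ∏ i ∈ S \ {u}, a i else 0) := by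
  rw [← Finset.sum_filter]
  by_cases hu : u ∈ T
  · rw [if_pos hu, show T \ {u} = T.erase u from (Finset.erase_eq T u).symm, prod_one_sub]
    refine Finset.sum_nbij' (fun S => insert u S) (fun S => S.erase u) ?_ ?_ ?_ ?_ ?_
    · intro S hS
      simp only [mem_powerset] at hS
      simp only [mem_filter, mem_powerset]
      exact ⟨(insert_subset_iff).2 ⟨hu, hS.trans (erase_subset u T)⟩, mem_insert_self u S⟩
    · intro S hS
      simp only [mem_filter, mem_powerset] at hS
      simp only [mem_powerset]
      exact erase_subset_erase u hS.1
    · intro S hS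
      simp only [mem_powerset] at hS
      have : u ∉ S := fun h => (mem_erase.1 (hS h)).1 rfl
      exact erase_insert this
    · intro S hS
      simp only [mem_filter, mem_powerset] at hS
      exact insert_erase hS.2
    · intro S hS
      simp only [mem_powerset] at hS
      have huS : u ∉ S := fun h => (mem_erase.1 (hS h)).1 rfl
      rw [card_insert_of_notMem huS, show (insert u S) \ {u} = (insert u S).erase u from
        (Finset.erase_eq _ u).symm, erase_insert huS]
      simp
  · rw [if_neg hu, Finset.filter_false_of_mem, Finset.sum_empty]
    intro S hS
    simp only [mem_powerset] at hS
    exact fun h => hu (hS h)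

lemma Qexp (N : V → ℕ) (μ : Finset V → ℝ) (x : V → ℕ) :
    Qfun N μ x
      = ∑ S : Finset V, (-1:ℝ)^S.card * phi μ S * ∏ i ∈ S, (x i : ℝ) / (N i : ℝ) := by
  unfold Qfun
  simp only [prod_one_sub (fun i => (x i : ℝ) / (N i : ℝ)), Finset.mul_sum]
  rw [swap_sum]
  exact Finset.sum_congr rfl fun S _ => by ring

lemma Rmem (N : V → ℕ) (μ : Finset V → ℝ) (x : V → ℕ) (u : V) :
    ∑ T : Finset V,
        μ T * (if u ∈ T then ∏ i ∈ T \ {u}, (1 - (x i : ℝ) / (N i : ℝ)) else 0)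
      = ∑ S ∈ univ.filter (fun S => u ∈ S),
          (-1:ℝ)^(S.card - 1) * phi μ S * ∏ i ∈ S \ {u}, (x i : ℝ) / (N i : ℝ) := by
  simp only [prod_one_sub_mem (fun i => (x i : ℝ) / (N i : ℝ)) u, Finset.mul_sum]
  rw [swap_sum]
  simp only [mul_ite, mul_zero]
  rw [← Finset.sum_filter]
  exact Finset.sum_congr rfl fun S _ => by ring

lemma Rfun_eq (N : V → ℕ) (μ : Finset V → ℝ) (x : V → ℕ) (u : V) :
    Rfun N μ {u} x
      = (1 - (x u : ℝ) / (N u : ℝ)) *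
          ∑ T : Finset V,
            μ T * (if u ∈ T then ∏ i ∈ T \ {u}, (1 - (x i : ℝ) / (N i : ℝ)) else 0) := by
  unfold Rfun
  have hf : univ.filter (fun T : Finset V => {u} ⊆ T) = univ.filter (fun T => u ∈ T) := by
    ext T; simp
  rw [hf, sum_filter, Finset.mul_sum]
  refine Finset.sum_congr rfl fun T _ => ?_
  by_cases hu : u ∈ T
  · simp only [if_pos hu]
    rw [show T \ {u} = T.erase u from (Finset.erase_eq T u).symm,
      ← Finset.mul_prod_erase T _ hu]
    ring
  · simp [hu]

lemma Qstep (N : V → ℕ) (hN : ∀ i, 1 ≤ N i) (μ : Finset V → ℝ) (x : V → ℕ) (u : V) :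
    Qfun N μ (fun i => x i + if i = u then 1 else 0)
      = Qfun N μ x - (1 / (N u : ℝ)) *
          ∑ T : Finset V,
            μ T * (if u ∈ T then ∏ i ∈ T \ {u}, (1 - (x i : ℝ) / (N i : ℝ)) else 0) := by
  unfold Qfun
  rw [Finset.mul_sum, ← Finset.sum_sub_distrib]
  refine Finset.sum_congr rfl fun T _ => ?_
  by_cases hu : u ∈ T
  · simp only [if_pos hu]
    have he : ∀ i ∈ T.erase u,
        (1 - ((x i + if i = u then 1 else 0 : ℕ) : ℝ) / (N i : ℝ))
          = 1 - (x i : ℝ) / (N i : ℝ) := by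
      intro i hi
      rw [if_neg (mem_erase.1 hi).1]
      norm_num
    rw [← Finset.mul_prod_erase T _ hu, ← Finset.mul_prod_erase T (fun i => 1 - (x i : ℝ) / (N i : ℝ)) hu,
      Finset.prod_congr rfl he,
      show T \ {u} = T.erase u from (Finset.erase_eq T u).symm]
    have hc : ((x u + if u = u then 1 else 0 : ℕ) : ℝ) = (x u : ℝ) + 1 := by
      rw [if_pos rfl]; push_cast; ring
    have hNu : (N u : ℝ) ≠ 0 := by
      exact Nat.cast_ne_zero.2 (Nat.one_le_iff_ne_zero.1 (hN u))
    rw [hc, add_div]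
    field_simp
    ring
  · simp only [if_neg hu, mul_zero, sub_zero]
    congr 1
    refine Finset.prod_congr rfl fun i hi => ?_
    rw [if_neg (fun h : i = u => hu (h ▸ hi))]
    norm_num

/-- Stage-`t` probability of drawing a red (resp. blue) marble from urn `u`
(Corollary 1 of the paper). -/
theorem draw_probabilities (N : V → ℕ) (hN : ∀ i, 1 ≤ N i)
    (μ : Finset V → ℝ) (hμ0 : ∀ T, 0 ≤ μ T) (hμ1 : ∑ T : Finset V, μ T = 1)
    (x : V → ℕ) (hx : ∀ i, x i ≤ N i) (u : V) (hxu : x u < N u)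
    (hQ : 0 < Qfun N μ x) :
    Pw1 N μ x u =
      (1 / (N u : ℝ)) *
        ((∑ S ∈ univ.filter (fun S => u ∈ S),
            (-1 : ℝ) ^ (S.card - 1) * phi μ S * ∏ i ∈ S \ {u}, (x i : ℝ) / (N i : ℝ)) /
          (∑ S : Finset V, (-1 : ℝ) ^ S.card * phi μ S * ∏ i ∈ S, (x i : ℝ) / (N i : ℝ))) ∧
    Pw0 N μ x u =
      (∑ S : Finset V, (-1 : ℝ) ^ S.card * phi μ S *
          ∏ i ∈ S, ((x i + if i = u then 1 else 0 : ℕ) : ℝ) / (N i : ℝ)) /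
        (∑ S : Finset V, (-1 : ℝ) ^ S.card * phi μ S * ∏ i ∈ S, (x i : ℝ) / (N i : ℝ)) := by
  have hNu : (N u : ℝ) ≠ 0 := Nat.cast_ne_zero.2 (Nat.one_le_iff_ne_zero.1 (hN u))
  have hxlt : (x u : ℝ) < (N u : ℝ) := by exact_mod_cast hxu
  have hdiff : (N u : ℝ) - (x u : ℝ) ≠ 0 := sub_ne_zero.2 hxlt.ne'
  have hDen : (∑ S : Finset V, (-1 : ℝ) ^ S.card * phi μ S *
      ∏ i ∈ S, (x i : ℝ) / (N i : ℝ)) = Qfun N μ x := (Qexp N μ x).symm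
  have hQne : Qfun N μ x ≠ 0 := hQ.ne'
  set A : ℝ := ∑ T : Finset V,
      μ T * (if u ∈ T then ∏ i ∈ T \ {u}, (1 - (x i : ℝ) / (N i : ℝ)) else 0) with hA
  have hNum : (∑ S ∈ univ.filter (fun S => u ∈ S),
      (-1 : ℝ) ^ (S.card - 1) * phi μ S * ∏ i ∈ S \ {u}, (x i : ℝ) / (N i : ℝ)) = A :=
    (Rmem N μ x u).symm
  have h1 : Pw1 N μ x u = (1 / (N u : ℝ)) * (A / Qfun N μ x) := by
    unfold Pw1
    rw [Rfun_eq]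
    have hfa : (1 : ℝ) - (x u : ℝ) / (N u : ℝ) = ((N u : ℝ) - (x u : ℝ)) / (N u : ℝ) := by
      field_simp
    have hsc : (1 / ((N u : ℝ) - (x u : ℝ))) * (((N u : ℝ) - (x u : ℝ)) / (N u : ℝ))
        = 1 / (N u : ℝ) := by field_simp
    rw [hfa, ← hsc]
    ring
  constructor
  · rw [h1, hNum, hDen]
  · have hQ' : Qfun N μ (fun i => x i + if i = u then 1 else 0)
        = Qfun N μ x - (1 / (N u : ℝ)) * A := Qstep N hN μ x u
    have hT' : (∑ S : Finset V, (-1 : ℝ) ^ S.card * phi μ S *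
        ∏ i ∈ S, ((x i + if i = u then 1 else 0 : ℕ) : ℝ) / (N i : ℝ))
          = Qfun N μ (fun i => x i + if i = u then 1 else 0) :=
      (Qexp N μ (fun i => x i + if i = u then 1 else 0)).symm
    rw [Pw0, h1, hDen, hT', hQ']
    field_simp
end

section
/- In a multi-urn search model, for every subset U ⊆ V and all draw counts x : V → ℕ with x_i ≤ N_i, the probability that a red marble has been drawn from every urn in U and from no other urn satisfies ∑_{T ⊆ V, T ⊇ U} μ(T) · (∏_{i ∈ U} x_i/N_i) · (∏_{j ∈ T∖U} (1 − x_j/N_j)) = ∑_{S : U ⊆ S ⊆ V} (−1)^{|S|−|U|} φ_S ∏_{i ∈ S} (x_i/N_i); in particular ∑_{S : U ⊆ S ⊆ V} (−1)^{|S|−|U|} φ_S ∏_{i ∈ S} (x_i/N_i) ≥ 0. -/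
open Finset

variable {V : Type*} [Fintype V] [DecidableEq V]

lemma aux_incl_excl (p : V → ℝ) (U T : Finset V) (hUT : U ⊆ T) :
    (∏ i ∈ U, p i) * ∏ j ∈ T \ U, (1 - p j)
      = ∑ S ∈ univ.filter (fun S => U ⊆ S ∧ S ⊆ T),
          (-1 : ℝ) ^ (S.card - U.card) * ∏ i ∈ S, p i := by
  have h1 : ∀ j, (1 - p j) = (-p j) + 1 := by intro j; ring
  calc (∏ i ∈ U, p i) * ∏ j ∈ T \ U, (1 - p j)
      = (∏ i ∈ U, p i) * ∑ t ∈ (T \ U).powerset,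
          (∏ i ∈ t, (-p i)) * ∏ i ∈ (T \ U) \ t, (1:ℝ) := by
        rw [show (∏ j ∈ T \ U, (1 - p j)) = ∏ j ∈ T \ U, ((-p j) + 1) by
          exact prod_congr rfl fun j _ => h1 j, prod_add]
    _ = ∑ t ∈ (T \ U).powerset, (-1 : ℝ) ^ t.card * ((∏ i ∈ U, p i) * ∏ i ∈ t, p i) := by
        rw [mul_sum]
        refine sum_congr rfl fun t _ => ?_
        have : ∏ i ∈ t, (-p i) = ∏ i ∈ t, ((-1 : ℝ) * p i) := by
          refine prod_congr rfl fun i _ => by ring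
        rw [prod_const_one, mul_one, this, prod_mul_distrib, prod_const]
        ring
    _ = _ := by
        refine sum_nbij' (fun t => U ∪ t) (fun S => S \ U) ?_ ?_ ?_ ?_ ?_
        · intro t ht
          simp only [mem_powerset] at ht
          simp only [mem_filter, mem_univ, true_and]
          constructor
          · exact subset_union_left
          · exact union_subset hUT (ht.trans sdiff_subset)
        · intro S hS
          simp only [mem_filter, mem_univ, true_and] at hS
          simpa [mem_powerset] using sdiff_subset_sdiff hS.2 (Subset.refl U)
        · intro t ht
          simp only [mem_powerset] at ht
          have : Disjoint U t := disjoint_of_subset_right ht sdiff_disjoint.symm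
          exact union_sdiff_cancel_left this
        · intro S hS
          simp only [mem_filter, mem_univ, true_and] at hS
          exact union_sdiff_of_subset hS.1
        · intro t ht
          simp only [mem_powerset] at ht
          have hd : Disjoint U t := disjoint_of_subset_right ht sdiff_disjoint.symm
          rw [prod_union hd, card_union_of_disjoint hd]
          congr 1
          congr 1
          omega

/-- **Lemma 1** of the paper: the probability of having drawn a red marble from
every urn of `U` and from no other urn. -/
theorem drawn_red_exactly_U (N : V → ℕ) (hN : ∀ i, 1 ≤ N i)
    (μ : Finset V → ℝ) (hμ0 : ∀ T, 0 ≤ μ T) (hμ1 : ∑ T : Finset V, μ T = 1)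
    (U : Finset V) (x : V → ℕ) (hx : ∀ i, x i ≤ N i) :
    (∑ T ∈ univ.filter (fun T => U ⊆ T),
        μ T * (∏ i ∈ U, (x i : ℝ) / (N i : ℝ)) * ∏ j ∈ T \ U, (1 - (x j : ℝ) / (N j : ℝ))) =
      (∑ S ∈ univ.filter (fun S => U ⊆ S),
        (-1 : ℝ) ^ (S.card - U.card) * phi μ S * ∏ i ∈ S, (x i : ℝ) / (N i : ℝ)) ∧
    0 ≤ ∑ S ∈ univ.filter (fun S => U ⊆ S),
        (-1 : ℝ) ^ (S.card - U.card) * phi μ S * ∏ i ∈ S, (x i : ℝ) / (N i : ℝ) := by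
  set p : V → ℝ := fun i => (x i : ℝ) / (N i : ℝ) with hp
  set g : Finset V → Finset V → ℝ :=
    fun S T => μ T * ((-1 : ℝ) ^ (S.card - U.card) * ∏ i ∈ S, p i) with hg
  have key : (∑ T ∈ univ.filter (fun T => U ⊆ T),
      μ T * (∏ i ∈ U, p i) * ∏ j ∈ T \ U, (1 - p j)) =
      ∑ S ∈ univ.filter (fun S => U ⊆ S),
        (-1 : ℝ) ^ (S.card - U.card) * phi μ S * ∏ i ∈ S, p i := by
    calc (∑ T ∈ univ.filter (fun T => U ⊆ T),
        μ T * (∏ i ∈ U, p i) * ∏ j ∈ T \ U, (1 - p j))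
        = ∑ T ∈ univ.filter (fun T => U ⊆ T),
            ∑ S ∈ univ.filter (fun S => U ⊆ S ∧ S ⊆ T), g S T := by
          refine sum_congr rfl fun T hT => ?_
          simp only [mem_filter, mem_univ, true_and] at hT
          rw [mul_assoc, aux_incl_excl p U T hT, mul_sum]
      _ = ∑ T : Finset V, ∑ S ∈ univ.filter (fun S => U ⊆ S ∧ S ⊆ T), g S T := by
          rw [sum_filter]
          refine sum_congr rfl fun T _ => ?_
          split
          · rfl
          · rename_i h
            rw [filter_false_of_mem, sum_empty]
            intro S _ hS
            exact h (hS.1.trans hS.2)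
      _ = ∑ S : Finset V, ∑ T : Finset V, if U ⊆ S ∧ S ⊆ T then g S T else 0 := by
          simp_rw [sum_filter]
          exact sum_comm
      _ = ∑ S ∈ univ.filter (fun S => U ⊆ S),
            ∑ T ∈ univ.filter (fun T => S ⊆ T), g S T := by
          rw [sum_filter]
          refine sum_congr rfl fun S _ => ?_
          split
          · rename_i h
            simp [sum_filter, h]
          · rename_i h
            refine sum_eq_zero fun T _ => ?_
            simp [h]
      _ = _ := by
          refine sum_congr rfl fun S _ => ?_
          rw [phi, mul_sum, sum_mul]
          refine sum_congr rfl fun T _ => ?_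
          simp only [hg]
          ring
  have hterm : ∀ T ∈ univ.filter (fun T => U ⊆ T),
      0 ≤ μ T * (∏ i ∈ U, p i) * ∏ j ∈ T \ U, (1 - p j) := by
    intro T _
    have hNpos : ∀ i, (0 : ℝ) < (N i : ℝ) := fun i => by
      exact_mod_cast Nat.lt_of_lt_of_le Nat.zero_lt_one (hN i)
    refine mul_nonneg (mul_nonneg (hμ0 T) (prod_nonneg fun i _ => ?_))
      (prod_nonneg fun j _ => ?_)
    · exact div_nonneg (Nat.cast_nonneg _) (le_of_lt (hNpos i))
    · rw [sub_nonneg, hp]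
      rw [div_le_one (hNpos j)]
      exact_mod_cast hx j
  exact ⟨key, key ▸ sum_nonneg hterm⟩
end

section
/- (Block Policy Optimality.) In every multi-urn search model there exists a block policy that is optimal, i.e., there is an ordering v^1,…,v^m of the urns of V such that the block policy it determines has expected cost E[C] less than or equal to the expected cost of every valid policy. This holds for arbitrary distributions μ (arbitrary correlations among the urns). -/
open Finset

variable {V : Type*} [Fintype V] [DecidableEq V]

/-- A valid policy: a finite sequence of urn queries in which urn `i` occurs
exactly `N i` times. -/
def validPolicy (N : V → ℕ) (L : List V) : Prop := ∀ i, L.count i = N i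

/-- Expected cost (expected number of blue marbles drawn) of a policy `L`. -/
noncomputable def ECost (N : V → ℕ) (μ : Finset V → ℝ) (L : List V) : ℝ :=
  ∑ t ∈ Finset.range L.length, Qfun N μ (fun i => (L.take (t + 1)).count i)

/-- The block policy determined by an ordering `v` of the urns: query urn `v 0`
for `N (v 0)` stages, then `v 1` for `N (v 1)` stages, and so on. -/
def blockPolicy (N : V → ℕ) (v : Fin (Fintype.card V) → V) : List V :=
  (List.ofFn v).flatMap (fun i => List.replicate (N i) i)

/-! `Qfun` is affine in each coordinate: one more draw from urn `i` lowers it by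
`Qslope N μ i x`, which does not depend on `x i` and decreases as the other urns are drawn from.
Hence, if the draws from `i` are split as `i^p B i^q` around a stretch `B` of other draws with
`p + q` fixed, the expected cost is a concave quadratic in `p`, so gathering them all before or
all after `B` costs no more. By induction on the policy, the draws after the first one can be
rearranged into a block policy at no extra cost; gathering the first draw with the block of its urn
in one of these two ways keeps the policy a block policy. So every valid policy is beaten by one of
the finitely many block policies, hence by the best of them. -/

lemma min_le_of_mul_add_mul_le {X Y Z k a : ℝ} (hk : 0 ≤ k) (ha : 0 ≤ a) (hka : 0 < k + a)
    (h : k * X + a * Y ≤ (k + a) * Z) : min X Y ≤ Z := by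
  refine le_of_mul_le_mul_left ?_ hka
  nlinarith [mul_le_mul_of_nonneg_left (min_le_left X Y) hk,
    mul_le_mul_of_nonneg_left (min_le_right X Y) ha]

section Lists

variable {α : Type*}

def blockList (n : α → ℕ) (l : List α) : List α :=
  l.flatMap fun x => List.replicate (n x) x

@[simp] lemma blockList_cons (n : α → ℕ) (a : α) (l : List α) :
    blockList n (a :: l) = List.replicate (n a) a ++ blockList n l := rfl

@[simp] lemma blockList_append (n : α → ℕ) (l₁ l₂ : List α) :
    blockList n (l₁ ++ l₂) = blockList n l₁ ++ blockList n l₂ := List.flatMap_append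

variable [DecidableEq α]

def countVec (l : List α) : α → ℕ := fun j => l.count j

@[simp] lemma countVec_nil : countVec ([] : List α) = 0 := by
  ext; simp [countVec]

lemma countVec_cons (a : α) (l : List α) : countVec (a :: l) = Pi.single a 1 + countVec l := by
  ext j; simp [countVec, List.count_cons, Pi.single_apply, @eq_comm _ a, add_comm]

lemma countVec_append (l₁ l₂ : List α) : countVec (l₁ ++ l₂) = countVec l₁ + countVec l₂ := by
  ext; simp [countVec]

lemma countVec_replicate (n : ℕ) (a : α) : countVec (List.replicate n a) = Pi.single a n := by
  ext j; simp [countVec, List.count_replicate, Pi.single_apply, @eq_comm _ a]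

def pathSum (f : (α → ℕ) → ℝ) (c : α → ℕ) : List α → ℝ
  | [] => 0
  | a :: l => f (c + Pi.single a 1) + pathSum f (c + Pi.single a 1) l

lemma pathSum_append (f : (α → ℕ) → ℝ) (c : α → ℕ) (l₁ l₂ : List α) :
    pathSum f c (l₁ ++ l₂) = pathSum f c l₁ + pathSum f (c + countVec l₁) l₂ := by
  induction l₁ generalizing c with
  | nil => simp [pathSum]
  | cons a l ih => simp only [List.cons_append, pathSum, ih, countVec_cons, add_assoc]

lemma sum_range_length_eq_pathSum (f : (α → ℕ) → ℝ) (c : α → ℕ) (l : List α) :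
    ∑ t ∈ range l.length, f (c + countVec (l.take (t + 1))) = pathSum f c l := by
  induction l generalizing c with
  | nil => simp [pathSum]
  | cons a l ih =>
    simp only [List.length_cons, sum_range_succ', List.take_succ_cons, countVec_cons, ← add_assoc,
      ih, pathSum, List.take_zero, countVec_nil, add_zero]
    ring

lemma blockList_add_single_of_not_mem {b : α} {l : List α} (hb : b ∉ l) (m : ℕ) (n : α → ℕ) :
    blockList (Pi.single b m + n) l = blockList n l :=
  List.flatMap_congr fun x hx => by
    rw [Pi.add_apply, Pi.single_eq_of_ne (ne_of_mem_of_not_mem hx hb), zero_add]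

lemma countVec_blockList [Fintype α] (n : α → ℕ) {l : List α} (hl : l.Perm univ.toList) :
    countVec (blockList n l) = n := by
  ext j
  rw [countVec, blockList, List.count_flatMap, (hl.map _).sum_eq, sum_map_toList]
  simp [List.count_replicate]

end Lists

section Cost

variable (N : V → ℕ) (μ : Finset V → ℝ)

noncomputable def Qslope (i : V) (x : V → ℕ) : ℝ :=
  ∑ T ∈ univ.filter (i ∈ ·), μ T / N i * ∏ j ∈ T.erase i, (1 - (x j : ℝ) / N j)

lemma Qfun_add_single (x : V → ℕ) (i : V) (m : ℕ) :
    Qfun N μ (x + Pi.single i m) = Qfun N μ x - m * Qslope N μ i x := by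
  rw [Qslope, mul_sum, sum_filter, Qfun, Qfun, ← sum_sub_distrib]
  refine sum_congr rfl fun T _ => ?_
  by_cases hi : i ∈ T
  · rw [if_pos hi, ← mul_prod_erase T _ hi, ← mul_prod_erase T _ hi,
      prod_congr rfl fun j hj => by rw [Pi.add_apply, Pi.single_eq_of_ne (ne_of_mem_erase hj),
        add_zero]]
    simp only [Pi.add_apply, Pi.single_eq_same, Nat.cast_add]
    ring
  · rw [if_neg hi, sub_zero, prod_congr rfl fun j hj => by
      rw [Pi.add_apply, Pi.single_eq_of_ne (ne_of_mem_of_not_mem hj hi), add_zero]]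

lemma Qslope_add_single (x : V → ℕ) (i : V) (m : ℕ) :
    Qslope N μ i (x + Pi.single i m) = Qslope N μ i x :=
  sum_congr rfl fun T _ => by
    rw [prod_congr rfl fun j hj => by
      rw [Pi.add_apply, Pi.single_eq_of_ne (ne_of_mem_erase hj), add_zero]]

variable {μ} in
lemma antitoneOn_Qslope (hμ : ∀ T, 0 ≤ μ T) (i : V) : AntitoneOn (Qslope N μ i) (Set.Iic N) := by
  intro x _ y hy hxy
  refine sum_le_sum fun T _ => mul_le_mul_of_nonneg_left (prod_le_prod (fun j _ => ?_)
    fun j _ => ?_) (div_nonneg (hμ T) (Nat.cast_nonneg _))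
  · have : (y j : ℝ) / N j ≤ 1 := div_le_one_of_le₀ (by exact_mod_cast hy j) (Nat.cast_nonneg _)
    linarith
  · have : (x j : ℝ) ≤ y j := by exact_mod_cast hxy j
    gcongr

lemma pathSum_Qfun_replicate (c : V → ℕ) (i : V) (p : ℕ) :
    pathSum (Qfun N μ) c (List.replicate p i) =
      p * Qfun N μ c - Qslope N μ i c * (p * (p + 1) / 2) := by
  induction p generalizing c with
  | zero => simp [pathSum]
  | succ p ih =>
    rw [List.replicate_succ, pathSum, ih, Qfun_add_single, Qslope_add_single]
    push_cast
    ring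

lemma pathSum_Qfun_add_single (c : V → ℕ) (i : V) (m : ℕ) (B : List V) :
    pathSum (Qfun N μ) (c + Pi.single i m) B =
      pathSum (Qfun N μ) c B - m * pathSum (Qslope N μ i) c B := by
  induction B generalizing c with
  | nil => simp [pathSum]
  | cons a B ih =>
    rw [pathSum, pathSum, pathSum, add_right_comm, ih, Qfun_add_single]
    ring

lemma pathSum_Qfun_replicate_append_replicate (c : V → ℕ) (i : V) {p q n : ℕ} (hn : p + q = n)
    (B S : List V) :
    pathSum (Qfun N μ) c (List.replicate p i ++ B ++ List.replicate q i ++ S) =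
      p * Qfun N μ c - Qslope N μ i c * (p * (p + 1) / 2)
      + (pathSum (Qfun N μ) c B - p * pathSum (Qslope N μ i) c B)
      + (q * (Qfun N μ (c + countVec B) - p * Qslope N μ i (c + countVec B))
          - Qslope N μ i (c + countVec B) * (q * (q + 1) / 2))
      + pathSum (Qfun N μ) (c + countVec B + Pi.single i n) S := by
  have hS : c + countVec (List.replicate p i ++ B ++ List.replicate q i) =
      c + countVec B + Pi.single i n := by
    simp only [countVec_append, countVec_replicate, ← hn, Pi.single_add]
    abel
  have hq : c + countVec (List.replicate p i ++ B) = c + countVec B + Pi.single i p := by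
    rw [countVec_append, countVec_replicate, ← add_assoc, add_right_comm]
  rw [pathSum_append, hS, pathSum_append, hq, pathSum_append, countVec_replicate,
    pathSum_Qfun_replicate, pathSum_Qfun_replicate, pathSum_Qfun_add_single, Qfun_add_single,
    Qslope_add_single]

variable {μ} in
lemma min_pathSum_merge_le (hμ : ∀ T, 0 ≤ μ T) (c : V → ℕ) (i : V) (k a : ℕ) (B S : List V)
    (hB : c + countVec B ≤ N) :
    min (pathSum (Qfun N μ) c (List.replicate (k + a) i ++ B ++ S))
        (pathSum (Qfun N μ) c (B ++ List.replicate (k + a) i ++ S)) ≤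
      pathSum (Qfun N μ) c (List.replicate k i ++ B ++ List.replicate a i ++ S) := by
  rcases Nat.eq_zero_or_pos (k + a) with hka | hka
  · obtain ⟨rfl, rfl⟩ : k = 0 ∧ a = 0 := by omega
    simp
  have hslope : Qslope N μ i (c + countVec B) ≤ Qslope N μ i c :=
    antitoneOn_Qslope N hμ i (le_self_add.trans hB) hB le_self_add
  have hl : List.replicate (k + a) i ++ B ++ S =
      List.replicate (k + a) i ++ B ++ List.replicate 0 i ++ S := by simp
  have hr : B ++ List.replicate (k + a) i ++ S =
      List.replicate 0 i ++ B ++ List.replicate (k + a) i ++ S := by simp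
  rw [hl, hr, pathSum_Qfun_replicate_append_replicate N μ c i (add_zero (k + a)),
    pathSum_Qfun_replicate_append_replicate N μ c i (zero_add (k + a)),
    pathSum_Qfun_replicate_append_replicate N μ c i rfl]
  have hk : (0 : ℝ) ≤ k := Nat.cast_nonneg k
  have ha : (0 : ℝ) ≤ a := Nat.cast_nonneg a
  refine min_le_of_mul_add_mul_le hk ha (by exact_mod_cast hka) ?_
  push_cast
  -- concavity in the split: the gap is `k * a * (k + a) / 2` times the drop of `Qslope` across `B`
  linear_combination (k * a * (k + a) / 2 : ℝ) * hslope

end Cost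

section BlockOptimality

variable {N : V → ℕ} {μ : Finset V → ℝ}

lemma exists_perm_pathSum_blockList_le (hμ : ∀ T, 0 ≤ μ T) (M : List V) (c : V → ℕ)
    (hM : c + countVec M ≤ N) :
    ∃ l : List V, l.Perm univ.toList ∧
      pathSum (Qfun N μ) c (blockList (countVec M) l) ≤ pathSum (Qfun N μ) c M := by
  induction M generalizing c with
  | nil =>
    refine ⟨univ.toList, List.Perm.refl _, le_of_eq ?_⟩
    rw [countVec_nil, show blockList 0 univ.toList = [] from
      List.flatMap_eq_nil_iff.2 fun _ _ => rfl]
  | cons b M ih =>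
    rw [countVec_cons, ← add_assoc] at hM
    obtain ⟨l', hl', hle⟩ := ih (c + Pi.single b 1) hM
    obtain ⟨l₁, l₂, rfl⟩ := List.append_of_mem (hl'.mem_iff.2 (mem_toList.2 (mem_univ b)))
    obtain ⟨hb₁, hb₂⟩ : b ∉ l₁ ∧ b ∉ l₂ := by
      simpa using (List.nodup_cons.1 (List.nodup_middle.1 (hl'.nodup_iff.2 (nodup_toList _)))).1
    set B := blockList (countVec M) l₁
    set S := blockList (countVec M) l₂
    have hBM : countVec B ≤ countVec M := fun j => by
      rw [← countVec_blockList (countVec M) hl', blockList_append]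
      exact (List.sublist_append_left B _).count_le j
    have hB : c + countVec B ≤ N := (add_le_add le_self_add hBM).trans hM
    have hsplit : pathSum (Qfun N μ) c
        (List.replicate 1 b ++ B ++ List.replicate (countVec M b) b ++ S) ≤
          pathSum (Qfun N μ) c (b :: M) := by
      simpa [pathSum, List.append_assoc] using hle
    rw [countVec_cons]
    rcases min_le_iff.1 ((min_pathSum_merge_le N hμ c b 1 (countVec M b) B S hB).trans hsplit)
      with h | h
    · refine ⟨b :: (l₁ ++ l₂), List.perm_middle.symm.trans hl', ?_⟩
      rwa [blockList_cons, blockList_append, blockList_add_single_of_not_mem hb₁,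
        blockList_add_single_of_not_mem hb₂, Pi.add_apply, Pi.single_eq_same, ← List.append_assoc]
    · refine ⟨l₁ ++ b :: l₂, hl', ?_⟩
      rwa [blockList_append, blockList_cons, blockList_add_single_of_not_mem hb₁,
        blockList_add_single_of_not_mem hb₂, Pi.add_apply, Pi.single_eq_same, ← List.append_assoc]

end BlockOptimality

lemma exists_bijective_ofFn_eq {l : List V} (hl : l.Perm univ.toList) :
    ∃ v : Fin (Fintype.card V) → V, Function.Bijective v ∧ List.ofFn v = l := by
  have hlen : l.length = Fintype.card V := by rw [hl.length_eq, length_toList, card_univ]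
  let e := (hl.nodup_iff.2 (nodup_toList _)).getEquivOfForallMemList l
    fun x => hl.mem_iff.2 (mem_toList.2 (mem_univ x))
  refine ⟨e ∘ Fin.cast hlen.symm, e.bijective.comp (finCongr hlen.symm).bijective, ?_⟩
  conv_rhs => rw [← List.ofFn_get l, List.ofFn_congr hlen]
  rfl

lemma ECost_eq_pathSum (N : V → ℕ) (μ : Finset V → ℝ) (L : List V) :
    ECost N μ L = pathSum (Qfun N μ) 0 L := by
  rw [ECost, ← sum_range_length_eq_pathSum]
  simp only [zero_add]
  rfl

theorem block_policy_optimality_general (N : V → ℕ)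
    (μ : Finset V → ℝ) (hμ0 : ∀ T, 0 ≤ μ T) :
    ∃ v : Fin (Fintype.card V) → V, Function.Bijective v ∧
      ∀ L : List V, validPolicy N L → ECost N μ (blockPolicy N v) ≤ ECost N μ L := by
  have : Nonempty {v : Fin (Fintype.card V) → V // Function.Bijective v} :=
    ⟨⟨_, (Fintype.equivFin V).symm.bijective⟩⟩
  obtain ⟨v₀, hv₀⟩ := Finite.exists_min
    fun v : {v : Fin (Fintype.card V) → V // Function.Bijective v} => ECost N μ (blockPolicy N v)
  refine ⟨v₀, v₀.2, fun L hL => ?_⟩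
  have hcount : countVec L = N := funext hL
  obtain ⟨l, hl, hle⟩ := exists_perm_pathSum_blockList_le hμ0 L 0 (by rw [zero_add, hcount])
  rw [hcount] at hle
  obtain ⟨v, hv, rfl⟩ := exists_bijective_ofFn_eq hl
  calc ECost N μ (blockPolicy N v₀) ≤ ECost N μ (blockPolicy N v) := hv₀ ⟨v, hv⟩
    _ ≤ ECost N μ L := by rw [ECost_eq_pathSum, ECost_eq_pathSum]; exact hle

/-- **Block Policy Optimality** (Theorem 2 of the paper): in every multi-urn
search model there exists an ordering of the urns whose block policy is
optimal among all valid policies. -/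
theorem block_policy_optimality (N : V → ℕ) (hN : ∀ i, 1 ≤ N i)
    (μ : Finset V → ℝ) (hμ0 : ∀ T, 0 ≤ μ T) (hμ1 : ∑ T : Finset V, μ T = 1) :
    ∃ v : Fin (Fintype.card V) → V, Function.Bijective v ∧
      ∀ L : List V, validPolicy N L → ECost N μ (blockPolicy N v) ≤ ECost N μ L :=
  block_policy_optimality_general N μ hμ0
end

section
/- In the single-marble model with parameters φ_i, let u_B be the block policy determined by an ordering v^1,…,v^m of the urns, with state counts x(t), and let τ(k) := ∑_{j=1}^{k−1} N_{v^j} be the first stage at which urn v^k is queried. Then for each k, Q(x(τ(k))) = 1 − ∑_{j=1}^{k−1} φ_{v^j}, and the total expected cost satisfies E[C](u_B) = ∑_{k=1}^{m} (N_{v^k} − (N_{v^k}+1)·φ_{v^k}/2) − ∑_{k=1}^{m−1} ∑_{l=k+1}^{m} N_{v^l} · φ_{v^k}. -/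
open Finset

variable {V : Type*} [Fintype V] [DecidableEq V]

/-- The single-marble model with parameters `φ i`. -/
noncomputable def muSingle (φ : V → ℝ) : Finset V → ℝ :=
  fun T => if T.card = 1 then ∑ i ∈ T, φ i
    else if T = ∅ then 1 - ∑ i : V, φ i else 0

/-!
In the single-marble model `Q` is affine in the draw counts, `Q x = 1 - ∑ i, φ i * x i / N i`:
each draw from urn `a` removes the mass `φ a / N a`. Along a policy, `Q` after `t` draws is thus
`1` minus the mass of the first `t` draws, so `E[C]` is the number of draws minus the sum over
stages of the mass drawn so far. For a block policy the latter splits along the blocks: the block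
of urn `a` contributes `φ a * (N a + 1) / 2` while it is being drawn, and the full mass `φ a`
at each of the later stages.
-/

section PrefixMass

variable {α : Type*} (w : α → ℝ)

def sumPrefixMass (L : List α) : ℝ :=
  ∑ t ∈ range L.length, ((L.take (t + 1)).map w).sum

lemma sumPrefixMass_singleton (a : α) : sumPrefixMass w [a] = w a := by
  simp [sumPrefixMass]

lemma sumPrefixMass_append (A B : List α) :
    sumPrefixMass w (A ++ B) =
      sumPrefixMass w A + B.length * (A.map w).sum + sumPrefixMass w B := by
  rw [sumPrefixMass, List.length_append, Finset.sum_range_add, add_assoc]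
  congr 1
  · refine Finset.sum_congr rfl fun t ht => ?_
    rw [List.take_append_of_le_length (by simp at ht; omega)]
  · rw [Finset.sum_congr rfl fun t _ => by
      rw [add_assoc, List.take_length_add_append, List.map_append, List.sum_append]]
    rw [sum_add_distrib, sum_const, card_range, nsmul_eq_mul, sumPrefixMass]

lemma sumPrefixMass_replicate (n : ℕ) (a : α) :
    sumPrefixMass w (List.replicate n a) = w a * (n * (n + 1) / 2) := by
  induction n with
  | zero => simp [sumPrefixMass]
  | succ n ih =>
    rw [List.replicate_succ', sumPrefixMass_append, ih, sumPrefixMass_singleton]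
    simp only [List.length_singleton, List.map_replicate, List.sum_replicate, nsmul_eq_mul]
    push_cast
    ring

end PrefixMass

section Blocks

variable {α : Type*} (N : α → ℕ)

def blocks (l : List α) : List α := l.flatMap fun a => List.replicate (N a) a

lemma blocks_cons (a : α) (l : List α) :
    blocks N (a :: l) = List.replicate (N a) a ++ blocks N l :=
  List.flatMap_cons

lemma sum_map_blocks {M : Type*} [AddCommMonoid M] (f : α → M) (l : List α) :
    ((blocks N l).map f).sum = (l.map fun a => N a • f a).sum := by
  induction l with
  | nil => simp [blocks]
  | cons a l ih => simp [blocks_cons, ih]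

lemma length_blocks (l : List α) : (blocks N l).length = (l.map N).sum := by
  simp [blocks, List.length_flatMap]

lemma sum_map_blocks_div (hN : ∀ a, N a ≠ 0) (φ : α → ℝ) (l : List α) :
    ((blocks N l).map fun a => φ a / N a).sum = (l.map φ).sum := by
  rw [sum_map_blocks]
  exact congrArg _ <| List.map_congr_left fun a _ => by
    rw [nsmul_eq_mul, mul_div_cancel₀ _ (Nat.cast_ne_zero.mpr (hN a))]

lemma take_blocks (l : List α) (k : ℕ) :
    (blocks N l).take ((l.take k).map N).sum = blocks N (l.take k) := by
  simpa [blocks, List.flatMap, List.map_take, Function.comp_def] using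
    List.take_sum_flatten (l.map fun a => List.replicate (N a) a) k

end Blocks

lemma sumPrefixMass_blocks_ofFn {α : Type*} {N : α → ℕ} (hN : ∀ a, N a ≠ 0) (φ : α → ℝ)
    {n : ℕ} (v : Fin n → α) :
    sumPrefixMass (fun a => φ a / N a) (blocks N (List.ofFn v)) =
      ∑ k, ((N (v k) : ℝ) + 1) * φ (v k) / 2 + ∑ k, ∑ l ∈ Ioi k, (N (v l) : ℝ) * φ (v k) := by
  induction n with
  | zero => simp [blocks, sumPrefixMass]
  | succ n ih =>
    have hN0 : (N (v 0) : ℝ) ≠ 0 := Nat.cast_ne_zero.mpr (hN _)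
    rw [List.ofFn_succ, blocks_cons, sumPrefixMass_append, sumPrefixMass_replicate, ih,
      length_blocks, Fin.sum_univ_succ, Fin.sum_univ_succ, Fin.sum_Ioi_zero]
    simp only [Fin.sum_Ioi_succ, List.map_ofFn, List.sum_ofFn, Nat.cast_sum, Function.comp_apply,
      List.map_replicate, List.sum_replicate, nsmul_eq_mul, ← sum_mul]
    field_simp
    ring

lemma sum_Iio_eq_sum_map_take_ofFn {α M : Type*} [AddCommMonoid M] {n : ℕ} (f : Fin n → α)
    (g : α → M) (k : Fin n) : ∑ j ∈ Iio k, g (f j) = (((List.ofFn f).take k).map g).sum := by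
  rw [List.map_take, List.map_ofFn, List.sum_take_ofFn]
  congr 1
  ext j
  simp only [mem_Iio, mem_filter, mem_univ, true_and, Fin.lt_def]

lemma sum_muSingle_mul (φ : V → ℝ) (g : Finset V → ℝ) :
    ∑ T, muSingle φ T * g T = (1 - ∑ i, φ i) * g ∅ + ∑ i, φ i * g {i} := by
  have hsupp : ∀ T ∈ univ, T ∉ insert ∅ (univ.image singleton) → muSingle φ T * g T = 0 := by
    intro T _ hT
    have hcard : T.card ≠ 1 := fun h => by
      obtain ⟨a, rfl⟩ := card_eq_one.mp h
      simp at hT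
    simp_all [muSingle]
  rw [← Finset.sum_subset (subset_univ _) hsupp, sum_insert (by simp),
    sum_image fun _ _ _ _ h => singleton_injective h]
  simp [muSingle]

lemma Qfun_muSingle_count (N : V → ℕ) (φ : V → ℝ) (L : List V) :
    Qfun N (muSingle φ) (fun i => L.count i) = 1 - (L.map fun a => φ a / N a).sum := by
  have hterm : ∀ i, φ i * (1 - (L.count i : ℝ) / N i) = φ i - L.count i * (φ i / N i) :=
    fun i => by ring
  have hmass : (L.map fun a => φ a / N a).sum = ∑ i, L.count i * (φ i / N i) := by
    rw [Finset.sum_list_map_count, ← Finset.sum_subset (subset_univ L.toFinset)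
      fun i _ hi => by rw [List.count_eq_zero_of_not_mem (by simpa using hi), Nat.cast_zero, zero_mul]]
    simp only [nsmul_eq_mul]
  rw [Qfun, sum_muSingle_mul, hmass]
  simp only [prod_empty, prod_singleton, hterm, sum_sub_distrib]
  ring

lemma ECost_muSingle (N : V → ℕ) (φ : V → ℝ) (L : List V) :
    ECost N (muSingle φ) L = L.length - sumPrefixMass (fun a => φ a / N a) L := by
  simp only [ECost, sumPrefixMass, Qfun_muSingle_count, sum_sub_distrib, sum_const, card_range,
    nsmul_one]

lemma Qfun_muSingle_blocks {N : V → ℕ} (hN : ∀ i, N i ≠ 0) (φ : V → ℝ) (l : List V) :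
    Qfun N (muSingle φ) (fun i => (blocks N l).count i) = 1 - (l.map φ).sum := by
  rw [Qfun_muSingle_count, sum_map_blocks_div N hN φ]

theorem single_marble_block_policy_cost_general (N : V → ℕ) (hN : ∀ i, 1 ≤ N i)
    (φ : V → ℝ)
    (v : Fin (Fintype.card V) → V) :
    (∀ k : Fin (Fintype.card V),
      Qfun N (muSingle φ)
          (fun i => ((blockPolicy N v).take (∑ j ∈ Finset.Iio k, N (v j))).count i) =
        1 - ∑ j ∈ Finset.Iio k, φ (v j)) ∧
    ECost N (muSingle φ) (blockPolicy N v) =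
      (∑ k : Fin (Fintype.card V),
          ((N (v k) : ℝ) - ((N (v k) : ℝ) + 1) * φ (v k) / 2)) -
        ∑ k : Fin (Fintype.card V), ∑ l ∈ Finset.Ioi k, (N (v l) : ℝ) * φ (v k) := by
  have hN0 : ∀ i, N i ≠ 0 := fun i => Nat.one_le_iff_ne_zero.mp (hN i)
  have hblocks : blockPolicy N v = blocks N (List.ofFn v) := rfl
  refine ⟨fun k => ?_, ?_⟩
  · rw [sum_Iio_eq_sum_map_take_ofFn, sum_Iio_eq_sum_map_take_ofFn, hblocks, take_blocks,
      Qfun_muSingle_blocks hN0]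
  · rw [hblocks, ECost_muSingle, sumPrefixMass_blocks_ofFn hN0, length_blocks, List.map_ofFn,
      List.sum_ofFn, sum_sub_distrib]
    push_cast [Function.comp_apply]
    ring

/-- Corollary 7 of the paper: block-policy probabilities and cost in the
single-marble model. -/
theorem single_marble_block_policy_cost (N : V → ℕ) (hN : ∀ i, 1 ≤ N i)
    (φ : V → ℝ) (hφ0 : ∀ i, 0 < φ i) (hφ1 : ∑ i : V, φ i ≤ 1)
    (v : Fin (Fintype.card V) → V) (hv : Function.Bijective v) :
    (∀ k : Fin (Fintype.card V),
      Qfun N (muSingle φ)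
          (fun i => ((blockPolicy N v).take (∑ j ∈ Finset.Iio k, N (v j))).count i) =
        1 - ∑ j ∈ Finset.Iio k, φ (v j)) ∧
    ECost N (muSingle φ) (blockPolicy N v) =
      (∑ k : Fin (Fintype.card V),
          ((N (v k) : ℝ) - ((N (v k) : ℝ) + 1) * φ (v k) / 2)) -
        ∑ k : Fin (Fintype.card V), ∑ l ∈ Finset.Ioi k, (N (v l) : ℝ) * φ (v k) :=
  single_marble_block_policy_cost_general N hN φ v
end

section
/- (Monotonicity of urn probabilities.) In a multi-urn search model, let x : V → ℕ satisfy x_i ≤ N_i for all i, let u be an urn with x_u < N_u, set x' := x + e_u, and assume Q(x') > 0 (hence Q(x) > 0). Then for every subset U ⊆ V with u ∈ U, R_U(x)/Q(x) ≥ R_U(x')/Q(x'); moreover the inequality is strict whenever R_U(x) > 0 and R_{{u}}(x)/Q(x) < 1. -/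
open Finset

variable {V : Type*} [Fintype V] [DecidableEq V]

/-- **Monotonicity of urn probabilities** (Theorem 7, part 1, of the paper):
drawing a blue marble from an urn `u ∈ U` cannot increase the conditional
probability that every urn in `U` contains a red marble. -/
theorem urn_probability_monotonicity (N : V → ℕ) (hN : ∀ i, 1 ≤ N i)
    (μ : Finset V → ℝ) (hμ0 : ∀ T, 0 ≤ μ T) (hμ1 : ∑ T : Finset V, μ T = 1)
    (x : V → ℕ) (hx : ∀ i, x i ≤ N i) (u : V) (hxu : x u < N u)
    (hQ' : 0 < Qfun N μ (fun j => x j + if j = u then 1 else 0))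
    (U : Finset V) (hU : u ∈ U) :
    Rfun N μ U (fun j => x j + if j = u then 1 else 0) /
        Qfun N μ (fun j => x j + if j = u then 1 else 0) ≤
      Rfun N μ U x / Qfun N μ x ∧
    (0 < Rfun N μ U x → Rfun N μ {u} x / Qfun N μ x < 1 →
      Rfun N μ U (fun j => x j + if j = u then 1 else 0) /
          Qfun N μ (fun j => x j + if j = u then 1 else 0) <
        Rfun N μ U x / Qfun N μ x) := by
  set x' : V → ℕ := fun j => x j + if j = u then 1 else 0 with hx'def
  have hNpos : ∀ i, (0:ℝ) < N i := fun i => by exact_mod_cast Nat.lt_of_lt_of_le Nat.zero_lt_one (hN i)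
  have hx'le : ∀ i, x' i ≤ N i := by
    intro i
    by_cases h : i = u
    · subst h; simp [hx'def]; omega
    · simp only [hx'def, if_neg h, add_zero]; exact hx i
  have hf0 : ∀ i, (0:ℝ) ≤ 1 - (x i : ℝ) / (N i : ℝ) := by
    intro i; rw [sub_nonneg, div_le_one (hNpos i)]; exact_mod_cast hx i
  have hf'0 : ∀ i, (0:ℝ) ≤ 1 - (x' i : ℝ) / (N i : ℝ) := by
    intro i; rw [sub_nonneg, div_le_one (hNpos i)]; exact_mod_cast hx'le i
  have ha : (0:ℝ) < 1 - (x u : ℝ) / (N u : ℝ) := by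
    rw [sub_pos, div_lt_one (hNpos u)]; exact_mod_cast hxu
  have hxnat : x u < x' u := by simp [hx'def]
  have hlt : (1:ℝ) - (x' u : ℝ) / (N u : ℝ) < 1 - (x u : ℝ) / (N u : ℝ) := by
    have hc : (x u : ℝ) < (x' u : ℝ) := by exact_mod_cast hxnat
    gcongr
    exact hNpos u
  set r : ℝ := (1 - (x' u : ℝ) / (N u : ℝ)) / (1 - (x u : ℝ) / (N u : ℝ)) with hrdef
  have hr0 : 0 ≤ r := div_nonneg (hf'0 u) ha.le
  have hr1 : r < 1 := (div_lt_one ha).mpr hlt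
  have hfeq : ∀ i, i ≠ u → (1:ℝ) - (x' i : ℝ) / (N i : ℝ) = 1 - (x i : ℝ) / (N i : ℝ) := by
    intro i hi; simp [hx'def, hi]
  have hprod : ∀ T : Finset V, u ∈ T →
      ∏ i ∈ T, (1 - (x' i : ℝ) / (N i : ℝ)) = r * ∏ i ∈ T, (1 - (x i : ℝ) / (N i : ℝ)) := by
    intro T hT
    rw [← Finset.mul_prod_erase T _ hT, ← Finset.mul_prod_erase T (fun i => 1 - (x i : ℝ) / (N i : ℝ)) hT,
      Finset.prod_congr rfl (fun i hi => hfeq i (Finset.ne_of_mem_erase hi))]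
    have h2 : r * (1 - (x u : ℝ) / (N u : ℝ)) = 1 - (x' u : ℝ) / (N u : ℝ) :=
      div_mul_cancel₀ _ ha.ne'
    rw [← h2]; ring
  have hprodne : ∀ T : Finset V, u ∉ T →
      ∏ i ∈ T, (1 - (x' i : ℝ) / (N i : ℝ)) = ∏ i ∈ T, (1 - (x i : ℝ) / (N i : ℝ)) := by
    intro T hT
    exact Finset.prod_congr rfl (fun i hi => hfeq i (fun h => hT (h ▸ hi)))
  have key1 : Rfun N μ U x' = r * Rfun N μ U x := by
    simp only [Rfun, Finset.mul_sum]
    refine Finset.sum_congr rfl ?_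
    intro T hT
    have hUT : U ⊆ T := (Finset.mem_filter.mp hT).2
    rw [hprod T (hUT hU)]; ring
  have key2 : Qfun N μ x' = Qfun N μ x + (r - 1) * Rfun N μ {u} x := by
    simp only [Qfun, Rfun, Finset.sum_filter, Finset.mul_sum, mul_ite, mul_zero]
    rw [← Finset.sum_add_distrib]
    refine Finset.sum_congr rfl ?_
    intro T _
    by_cases hT : u ∈ T
    · rw [if_pos (Finset.singleton_subset_iff.mpr hT), hprod T hT]; ring
    · rw [if_neg (fun h => hT (Finset.singleton_subset_iff.mp h)), hprodne T hT]; ring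
  have hterm0 : ∀ T : Finset V, 0 ≤ μ T * ∏ i ∈ T, (1 - (x i : ℝ) / (N i : ℝ)) :=
    fun T => mul_nonneg (hμ0 T) (Finset.prod_nonneg fun i _ => hf0 i)
  have hB0 : 0 ≤ Rfun N μ {u} x := Finset.sum_nonneg fun T _ => hterm0 T
  have hR0 : 0 ≤ Rfun N μ U x := Finset.sum_nonneg fun T _ => hterm0 T
  have hRB : Rfun N μ U x ≤ Rfun N μ {u} x := by
    apply Finset.sum_le_sum_of_subset_of_nonneg
    · intro T hT
      rw [Finset.mem_filter] at hT ⊢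
      exact ⟨hT.1, Finset.singleton_subset_iff.mpr (hT.2 hU)⟩
    · exact fun T _ _ => hterm0 T
  have hA0 : 0 ≤ Qfun N μ x - Rfun N μ {u} x := by
    have h := Finset.sum_filter_add_sum_filter_not Finset.univ (fun T : Finset V => {u} ⊆ T)
      (fun T => μ T * ∏ i ∈ T, (1 - (x i : ℝ) / (N i : ℝ)))
    have h2 : 0 ≤ ∑ T ∈ Finset.univ.filter (fun T : Finset V => ¬ {u} ⊆ T),
        μ T * ∏ i ∈ T, (1 - (x i : ℝ) / (N i : ℝ)) :=
      Finset.sum_nonneg fun T _ => hterm0 T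
    simp only [Qfun, Rfun]
    linarith [h, h2]
  rw [key2] at hQ'
  have hQpos : 0 < Qfun N μ x := by nlinarith [mul_nonneg (sub_nonneg.mpr hr1.le) hB0]
  rw [key1, key2]
  constructor
  · rw [div_le_div_iff₀ hQ' hQpos]
    nlinarith [mul_nonneg (mul_nonneg hR0 (sub_nonneg.mpr hr1.le)) hA0]
  · intro hRpos hBQ
    have hBltQ : Rfun N μ {u} x < Qfun N μ x := (div_lt_one hQpos).mp hBQ
    rw [div_lt_div_iff₀ hQ' hQpos]
    nlinarith [mul_pos (mul_pos hRpos (sub_pos.mpr hr1)) (sub_pos.mpr hBltQ)]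
end

section
/- (Monotonicity of draw probabilities.) In a multi-urn search model, let x : V → ℕ satisfy x_i ≤ N_i for all i, let u be an urn with N_u − x_u > 1, set x' := x + e_u, and assume Q(x') > 0 (hence Q(x) > 0). Then P(w(x,u)=1) ≤ P(w(x',u)=1), i.e., (1/(N_u − x_u))·R_{{u}}(x)/Q(x) ≤ (1/(N_u − x_u − 1))·R_{{u}}(x')/Q(x'); moreover the inequality is strict whenever P(w(x,u)=1) > 0. -/
open Finset

variable {V : Type*} [Fintype V] [DecidableEq V]

/-- **Monotonicity of draw probabilities** (Theorem 7, part 2, of the paper):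
after drawing a blue marble from urn `u`, the probability that the next marble
drawn from `u` is red does not decrease. -/
theorem draw_probability_monotonicity (N : V → ℕ) (hN : ∀ i, 1 ≤ N i)
    (μ : Finset V → ℝ) (hμ0 : ∀ T, 0 ≤ μ T) (hμ1 : ∑ T : Finset V, μ T = 1)
    (x : V → ℕ) (hx : ∀ i, x i ≤ N i) (u : V) (hxu : x u + 1 < N u)
    (hQ' : 0 < Qfun N μ (fun j => x j + if j = u then 1 else 0)) :
    (1 / ((N u : ℝ) - (x u : ℝ))) * (Rfun N μ {u} x / Qfun N μ x) ≤
      (1 / ((N u : ℝ) - (x u : ℝ) - 1)) *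
        (Rfun N μ {u} (fun j => x j + if j = u then 1 else 0) /
          Qfun N μ (fun j => x j + if j = u then 1 else 0)) ∧
    (0 < (1 / ((N u : ℝ) - (x u : ℝ))) * (Rfun N μ {u} x / Qfun N μ x) →
      (1 / ((N u : ℝ) - (x u : ℝ))) * (Rfun N μ {u} x / Qfun N μ x) <
        (1 / ((N u : ℝ) - (x u : ℝ) - 1)) *
          (Rfun N μ {u} (fun j => x j + if j = u then 1 else 0) /
            Qfun N μ (fun j => x j + if j = u then 1 else 0))) := by
  set x' : V → ℕ := fun j => x j + if j = u then 1 else 0 with hx'def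
  have hNu : (1:ℝ) ≤ (N u : ℝ) := by exact_mod_cast hN u
  have hNu0 : (0:ℝ) < (N u : ℝ) := by linarith
  have hxu' : (x u : ℝ) + 1 < (N u : ℝ) := by exact_mod_cast hxu
  -- factor nonnegativity
  have hfnn : ∀ (y : V → ℕ), (∀ i, y i ≤ N i) → ∀ i : V, (0:ℝ) ≤ 1 - (y i : ℝ) / (N i : ℝ) := by
    intro y hy i
    have h2 : (0:ℝ) < (N i : ℝ) := by exact_mod_cast (hN i)
    have h1 : (y i : ℝ) ≤ (N i : ℝ) := by exact_mod_cast hy i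
    rw [sub_nonneg, div_le_one h2]; exact h1
  have hx'le : ∀ i, x' i ≤ N i := by
    intro i
    by_cases hi : i = u
    · subst hi
      have : x' i = x i + 1 := by simp [hx'def]
      omega
    · simp only [hx'def, if_neg hi]; simpa using hx i
  have hfilter : (univ.filter (fun T : Finset V => ({u} : Finset V) ⊆ T))
      = univ.filter (fun T => u ∈ T) := by
    apply Finset.filter_congr; intro T _; simp [Finset.singleton_subset_iff]
  -- R decomposition
  have keyR : ∀ (y : V → ℕ), Rfun N μ {u} y
      = (1 - (y u : ℝ) / (N u : ℝ)) *
        ∑ T ∈ univ.filter (fun T => u ∈ T), μ T * ∏ i ∈ T.erase u, (1 - (y i : ℝ) / (N i : ℝ)) := by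
    intro y
    rw [Rfun, hfilter, Finset.mul_sum]
    apply Finset.sum_congr rfl
    intro T hT
    simp only [Finset.mem_filter] at hT
    rw [← Finset.mul_prod_erase T _ hT.2]
    ring
  -- Q decomposition
  have keyQ : ∀ (y : V → ℕ), Qfun N μ y
      = (∑ T ∈ univ.filter (fun T => u ∉ T), μ T * ∏ i ∈ T, (1 - (y i : ℝ) / (N i : ℝ)))
        + Rfun N μ {u} y := by
    intro y
    rw [Rfun, hfilter, Qfun,
      ← Finset.sum_filter_add_sum_filter_not univ (fun T => u ∉ T)
        (fun T => μ T * ∏ i ∈ T, (1 - (y i : ℝ) / (N i : ℝ)))]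
    congr 1
    apply Finset.sum_congr _ (fun _ _ => rfl)
    apply Finset.filter_congr; intro T _; simp
  set A := ∑ T ∈ univ.filter (fun T : Finset V => u ∉ T), μ T * ∏ i ∈ T, (1 - (x i : ℝ) / (N i : ℝ)) with hAdef
  set B := ∑ T ∈ univ.filter (fun T : Finset V => u ∈ T), μ T * ∏ i ∈ T.erase u, (1 - (x i : ℝ) / (N i : ℝ)) with hBdef
  have hx'eq : ∀ i, i ≠ u → ((x' i : ℝ)) = (x i : ℝ) := by
    intro i hi; simp [hx'def, hi]
  have hx'u : ((x' u : ℝ)) = (x u : ℝ) + 1 := by simp [hx'def]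
  -- A for x' equals A
  have hA' : (∑ T ∈ univ.filter (fun T : Finset V => u ∉ T),
      μ T * ∏ i ∈ T, (1 - (x' i : ℝ) / (N i : ℝ))) = A := by
    apply Finset.sum_congr rfl
    intro T hT
    simp only [Finset.mem_filter] at hT
    congr 1
    apply Finset.prod_congr rfl
    intro i hi
    rw [hx'eq i (fun h => hT.2 (h ▸ hi))]
  -- B for x' equals B
  have hB' : (∑ T ∈ univ.filter (fun T : Finset V => u ∈ T),
      μ T * ∏ i ∈ T.erase u, (1 - (x' i : ℝ) / (N i : ℝ))) = B := by
    apply Finset.sum_congr rfl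
    intro T _
    congr 1
    apply Finset.prod_congr rfl
    intro i hi
    rw [hx'eq i (Finset.ne_of_mem_erase hi)]
  have hAnn : 0 ≤ A := by
    apply Finset.sum_nonneg
    intro T _
    exact mul_nonneg (hμ0 T) (Finset.prod_nonneg fun i _ => hfnn x hx i)
  have hBnn : 0 ≤ B := by
    apply Finset.sum_nonneg
    intro T _
    exact mul_nonneg (hμ0 T) (Finset.prod_nonneg fun i _ => hfnn x hx i)
  set p : ℝ := 1 - (x u : ℝ) / (N u : ℝ) with hpdef
  set p' : ℝ := 1 - ((x u : ℝ) + 1) / (N u : ℝ) with hp'def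
  have hRx : Rfun N μ {u} x = p * B := keyR x
  have hRx' : Rfun N μ {u} x' = p' * B := by rw [keyR x', hx'u, hB']
  have hQx : Qfun N μ x = A + p * B := by rw [keyQ x, hRx]
  have hQx' : Qfun N μ x' = A + p' * B := by rw [keyQ x', hRx', hA']
  -- basic positivity
  have hp'pos : 0 < p' := by
    rw [hp'def, sub_pos, div_lt_one hNu0]; exact hxu'
  have hppos : 0 < p := by
    rw [hpdef, sub_pos, div_lt_one hNu0]; linarith
  have hQ'pos : 0 < A + p' * B := by rw [← hQx']; exact hQ'
  have hple : p' ≤ p := by rw [hpdef, hp'def]; gcongr; linarith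
  have hQpos : 0 < A + p * B := by linarith [mul_le_mul_of_nonneg_right hple hBnn]
  set a : ℝ := (N u : ℝ) - (x u : ℝ) with hadef
  have ha1 : 1 < a := by rw [hadef]; linarith
  have ha0 : 0 < a := by linarith
  have ha10 : 0 < a - 1 := by linarith
  have hpa : p = a / (N u : ℝ) := by rw [hpdef, hadef]; field_simp
  have hp'a : p' = (a - 1) / (N u : ℝ) := by rw [hp'def, hadef]; field_simp; ring
  -- rewrite both sides
  have hLHS : (1 / a) * (Rfun N μ {u} x / Qfun N μ x) = B / ((N u : ℝ) * (A + p * B)) := by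
    rw [hRx, hQx, hpa]
    field_simp
  have hRHS : (1 / (a - 1)) * (Rfun N μ {u} x' / Qfun N μ x') = B / ((N u : ℝ) * (A + p' * B)) := by
    rw [hRx', hQx', hp'a]
    field_simp
  have hQle : A + p' * B ≤ A + p * B := by
    linarith [mul_le_mul_of_nonneg_right hple hBnn]
  have hd'pos : 0 < (N u : ℝ) * (A + p' * B) := mul_pos hNu0 hQ'pos
  have hdpos : 0 < (N u : ℝ) * (A + p * B) := mul_pos hNu0 hQpos
  have hdle : (N u : ℝ) * (A + p' * B) ≤ (N u : ℝ) * (A + p * B) :=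
    mul_le_mul_of_nonneg_left hQle hNu0.le
  constructor
  · rw [hLHS, hRHS, div_le_div_iff₀ hdpos hd'pos]
    exact mul_le_mul_of_nonneg_left hdle hBnn
  · intro hpos
    rw [hLHS] at hpos
    rw [hLHS, hRHS]
    have hBpos : 0 < B := by
      by_contra h
      push_neg at h
      have hB0 : B = 0 := le_antisymm h hBnn
      rw [hB0] at hpos; simp at hpos
    have hplt : p' < p := by
      rw [hpa, hp'a, div_lt_div_iff₀ hNu0 hNu0]
      have := mul_lt_mul_of_pos_right (show a - 1 < a by linarith) hNu0
      linarith
    have hQlt : A + p' * B < A + p * B := by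
      have := mul_lt_mul_of_pos_right hplt hBpos
      linarith
    exact div_lt_div_of_pos_left hBpos hd'pos (mul_lt_mul_of_pos_left hQlt hNu0)
end

section
/- (Marble Probability Bound.) In a multi-urn search model, let x : V → ℕ satisfy x_j ≤ N_j for all j, let u and i be urns with N_u − x_u > 1 and x_i < N_i, set x' := x + e_u, and assume Q(x') > 0, P(w(x,u)=1) > 0, and P(w(x,i)=1) > 0. Then the relative growth of the probability of drawing a red marble from the queried urn u dominates that of any other urn i: P(w(x',u)=1)/P(w(x,u)=1) ≥ P(w(x',i)=1)/P(w(x,i)=1). -/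
open Finset

variable {V : Type*} [Fintype V] [DecidableEq V]

/-- **Marble Probability Bound** (Theorem 8 of the paper): the relative growth
of the probability of drawing a red marble from the queried urn `u` dominates
that of any other urn `i`. -/
theorem marble_probability_bound (N : V → ℕ) (hN : ∀ j, 1 ≤ N j)
    (μ : Finset V → ℝ) (hμ0 : ∀ T, 0 ≤ μ T) (hμ1 : ∑ T : Finset V, μ T = 1)
    (x : V → ℕ) (hx : ∀ j, x j ≤ N j) (u i : V)
    (hxu : x u + 1 < N u) (hxi : x i < N i)
    (hQ' : 0 < Qfun N μ (fun j => x j + if j = u then 1 else 0))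
    (hPu : 0 < Pw1 N μ x u) (hPi : 0 < Pw1 N μ x i) :
    Pw1 N μ (fun j => x j + if j = u then 1 else 0) i / Pw1 N μ x i ≤
      Pw1 N μ (fun j => x j + if j = u then 1 else 0) u / Pw1 N μ x u := by
  by_cases hiu : i = u
  · subst hiu; exact le_refl _
  set x' : V → ℕ := fun j => x j + if j = u then 1 else 0 with hx'def
  have hx'u : (x' u : ℝ) = (x u : ℝ) + 1 := by simp [hx'def]
  have hx'i : (x' i : ℝ) = (x i : ℝ) := by simp [hx'def, hiu]
  have hNpos : ∀ j, (0:ℝ) < N j := fun j => by exact_mod_cast (hN j)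
  have hxuR : (x u : ℝ) + 1 < N u := by exact_mod_cast hxu
  have hxiR : (x i : ℝ) < N i := by exact_mod_cast hxi
  have hx'le : ∀ j, (x' j : ℝ) ≤ N j := by
    intro j
    by_cases hj : j = u
    · subst hj; rw [hx'u]; linarith
    · have : x' j = x j := by simp [hx'def, hj]
      rw [this]; exact_mod_cast hx j
  have hxle : ∀ j, (x j : ℝ) ≤ N j := fun j => by exact_mod_cast hx j
  have hfac0 : ∀ j, 0 ≤ 1 - (x' j : ℝ) / N j := by
    intro j
    have := hx'le j
    have := hNpos j
    rw [sub_nonneg, div_le_one (hNpos j)]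
    exact hx'le j
  have hfacle : ∀ j, 1 - (x' j : ℝ) / N j ≤ 1 - (x j : ℝ) / N j := by
    intro j
    have hxx : (x j : ℝ) ≤ x' j := by
      have : x j ≤ x' j := by simp [hx'def]
      exact_mod_cast this
    have hNj := hNpos j
    gcongr
  have hprodle : ∀ T : Finset V,
      ∏ j ∈ T, (1 - (x' j : ℝ) / N j) ≤ ∏ j ∈ T, (1 - (x j : ℝ) / N j) :=
    fun T => Finset.prod_le_prod (fun j _ => hfac0 j) (fun j _ => hfacle j)
  have hQle : Qfun N μ x' ≤ Qfun N μ x :=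
    Finset.sum_le_sum fun T _ => mul_le_mul_of_nonneg_left (hprodle T) (hμ0 T)
  have hQ : 0 < Qfun N μ x := lt_of_lt_of_le hQ' hQle
  have hRile : Rfun N μ {i} x' ≤ Rfun N μ {i} x :=
    Finset.sum_le_sum fun T _ => mul_le_mul_of_nonneg_left (hprodle T) (hμ0 T)
  -- the ratio r
  set r : ℝ := ((N u : ℝ) - x u - 1) / ((N u : ℝ) - x u) with hrdef
  have hnuxu : (0:ℝ) < (N u : ℝ) - x u := by linarith
  have hnuxu1 : (0:ℝ) < (N u : ℝ) - x u - 1 := by linarith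
  have hrpos : 0 < r := div_pos hnuxu1 hnuxu
  have key : ∀ T : Finset V, u ∈ T →
      ∏ j ∈ T, (1 - (x' j : ℝ) / N j) = r * ∏ j ∈ T, (1 - (x j : ℝ) / N j) := by
    intro T hT
    rw [← Finset.mul_prod_erase T (fun j => 1 - (x' j : ℝ) / N j) hT,
        ← Finset.mul_prod_erase T (fun j => 1 - (x j : ℝ) / N j) hT]
    have hprod : ∏ j ∈ T.erase u, (1 - (x' j : ℝ) / N j)
        = ∏ j ∈ T.erase u, (1 - (x j : ℝ) / N j) := by
      refine Finset.prod_congr rfl fun j hj => ?_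
      have : x' j = x j := by simp [hx'def, Finset.ne_of_mem_erase hj]
      rw [this]
    rw [hprod, ← mul_assoc]
    congr 1
    rw [hx'u, hrdef]
    have h1 : (N u : ℝ) ≠ 0 := ne_of_gt (hNpos u)
    have h2 : (N u : ℝ) - x u ≠ 0 := ne_of_gt hnuxu
    field_simp
    ring
  have hRu' : Rfun N μ {u} x' = r * Rfun N μ {u} x := by
    rw [Rfun, Rfun, Finset.mul_sum]
    refine Finset.sum_congr rfl fun T hT => ?_
    have hu : u ∈ T := by
      simp only [Finset.mem_filter, Finset.singleton_subset_iff] at hT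
      exact hT.2
    rw [key T hu]; ring
  -- positivity of R's
  have hnixi : (0:ℝ) < (N i : ℝ) - x i := by linarith
  have hRi : 0 < Rfun N μ {i} x := by
    have h := hPi
    rw [Pw1] at h
    have hc : (0:ℝ) < 1 / ((N i : ℝ) - x i) := one_div_pos.mpr hnixi
    have h2 : 0 < Rfun N μ {i} x / Qfun N μ x := by
      by_contra h3
      push_neg at h3
      nlinarith [mul_nonneg hc.le (neg_nonneg.mpr h3)]
    have := (div_pos_iff).mp h2
    rcases this with ⟨h3, _⟩ | ⟨_, h4⟩
    · exact h3
    · linarith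
  have hRu : 0 < Rfun N μ {u} x := by
    have h := hPu
    rw [Pw1] at h
    have hc : (0:ℝ) < 1 / ((N u : ℝ) - x u) := one_div_pos.mpr hnuxu
    have h2 : 0 < Rfun N μ {u} x / Qfun N μ x := by
      by_contra h3
      push_neg at h3
      nlinarith [mul_nonneg hc.le (neg_nonneg.mpr h3)]
    have := (div_pos_iff).mp h2
    rcases this with ⟨h3, _⟩ | ⟨_, h4⟩
    · exact h3
    · linarith
  -- rewrite all four Pw1's
  have hRi'0 : 0 ≤ Rfun N μ {i} x' :=
    Finset.sum_nonneg fun T _ => mul_nonneg (hμ0 T) (Finset.prod_nonneg fun j _ => hfac0 j)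
  have hPuR : Pw1 N μ x u = (1 / ((N u : ℝ) - x u)) * (Rfun N μ {u} x / Qfun N μ x) := rfl
  have hPu'R : Pw1 N μ x' u
      = (1 / ((N u : ℝ) - x u)) * (Rfun N μ {u} x / Qfun N μ x') := by
    rw [Pw1, hx'u, hRu', hrdef]
    have h2 : (N u : ℝ) - x u ≠ 0 := ne_of_gt hnuxu
    have h3 : ((N u : ℝ) - (x u + 1)) ≠ 0 := by
      intro h; apply ne_of_gt hnuxu1; linarith
    field_simp
    ring
  have hPiR : Pw1 N μ x i = (1 / ((N i : ℝ) - x i)) * (Rfun N μ {i} x / Qfun N μ x) := rfl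
  have hPi'R : Pw1 N μ x' i
      = (1 / ((N i : ℝ) - x i)) * (Rfun N μ {i} x' / Qfun N μ x) * (Qfun N μ x / Qfun N μ x') := by
    rw [Pw1, hx'i]
    have hQne : Qfun N μ x ≠ 0 := ne_of_gt hQ
    field_simp
  -- final computation
  rw [hPi'R, hPiR, hPu'R, hPuR]
  have hQQ : 0 < Qfun N μ x / Qfun N μ x' := div_pos hQ hQ'
  have hL : (1 / ((N i : ℝ) - x i)) * (Rfun N μ {i} x' / Qfun N μ x) * (Qfun N μ x / Qfun N μ x')
      / ((1 / ((N i : ℝ) - x i)) * (Rfun N μ {i} x / Qfun N μ x))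
      = (Rfun N μ {i} x' / Rfun N μ {i} x) * (Qfun N μ x / Qfun N μ x') := by
    have h1 : ((N i : ℝ) - x i) ≠ 0 := ne_of_gt hnixi
    have h2 : Qfun N μ x ≠ 0 := ne_of_gt hQ
    have h3 : Rfun N μ {i} x ≠ 0 := ne_of_gt hRi
    have h4 : Qfun N μ x' ≠ 0 := ne_of_gt hQ'
    field_simp
  have hR : (1 / ((N u : ℝ) - x u)) * (Rfun N μ {u} x / Qfun N μ x')
      / ((1 / ((N u : ℝ) - x u)) * (Rfun N μ {u} x / Qfun N μ x))
      = Qfun N μ x / Qfun N μ x' := by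
    have h1 : ((N u : ℝ) - x u) ≠ 0 := ne_of_gt hnuxu
    have h2 : Qfun N μ x ≠ 0 := ne_of_gt hQ
    have h3 : Rfun N μ {u} x ≠ 0 := ne_of_gt hRu
    have h4 : Qfun N μ x' ≠ 0 := ne_of_gt hQ'
    field_simp
  rw [hL, hR]
  have hratio : Rfun N μ {i} x' / Rfun N μ {i} x ≤ 1 := (div_le_one hRi).mpr hRile
  exact mul_le_of_le_one_left (le_of_lt hQQ) hratio
end

section
/- In a multi-urn search model, fix distinct urns i and u, let x : V → ℕ satisfy x_j ≤ N_j for all j with x_u < N_u, and set x' := x + e_u. Define h(x) := ∑_{S ⊆ V : i ∈ S} (−1)^{|S|} φ_S ∏_{j ∈ S∖{i}} (x_j/N_j). Then h(x') ≥ h(x); that is, h(x') − h(x) = (1/N_u) · ∑_{S ⊆ V : {i,u} ⊆ S} (−1)^{|S|} φ_S ∏_{j ∈ S∖{i,u}} (x_j/N_j) ≥ 0. -/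
open Finset

variable {V : Type*} [Fintype V] [DecidableEq V]

set_option linter.unusedSectionVars false in
lemma prod_one_sub_eq_aux (y : V → ℝ) (s : Finset V) :
    ∏ j ∈ s, (1 - y j) = ∑ t ∈ s.powerset, (-1:ℝ)^t.card * ∏ j ∈ t, y j := by
  have : ∀ j ∈ s, (1 - y j) = (-y j) + 1 := by intro j _; ring
  rw [Finset.prod_congr rfl this, Finset.prod_add]
  refine Finset.sum_congr rfl fun t _ => ?_
  rw [Finset.prod_congr rfl (fun i (_ : i ∈ t) => (neg_eq_neg_one_mul (y i))),
    Finset.prod_mul_distrib, Finset.prod_const]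
  simp

lemma key_aux (μ : Finset V → ℝ) (W : Finset V) (y : V → ℝ) :
    ∑ S ∈ univ.filter (fun S => W ⊆ S), (-1:ℝ)^S.card * phi μ S * ∏ j ∈ S \ W, y j
    = (-1:ℝ)^W.card * ∑ T ∈ univ.filter (fun T => W ⊆ T), μ T * ∏ j ∈ T \ W, (1 - y j) := by
  simp only [phi, Finset.mul_sum, Finset.sum_mul]
  rw [Finset.sum_comm' (t' := univ.filter (fun T => W ⊆ T))
    (s' := fun T => univ.filter (fun S => W ⊆ S ∧ S ⊆ T))]
  · refine Finset.sum_congr rfl fun T hT => ?_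
    simp only [mem_filter, mem_univ, true_and] at hT
    rw [prod_one_sub_eq_aux, Finset.mul_sum, Finset.mul_sum]
    refine Finset.sum_nbij' (fun S => S \ W) (fun t => W ∪ t) ?_ ?_ ?_ ?_ ?_
    · intro S hS
      simp only [mem_filter, mem_univ, true_and, mem_powerset] at *
      exact sdiff_subset_sdiff hS.2 (le_refl W)
    · intro t ht
      simp only [mem_filter, mem_univ, true_and, mem_powerset] at *
      exact ⟨subset_union_left, union_subset hT (ht.trans sdiff_subset)⟩
    · intro S hS
      simp only [mem_filter, mem_univ, true_and] at hS
      exact Finset.union_sdiff_of_subset hS.1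
    · intro t ht
      simp only [mem_powerset] at ht
      exact Finset.union_sdiff_cancel_left (Finset.disjoint_sdiff.mono_right ht)
    · intro S hS
      simp only [mem_filter, mem_univ, true_and] at hS
      have : S.card = W.card + (S \ W).card := by
        rw [Finset.card_sdiff_of_subset hS.1]
        have := Finset.card_le_card hS.1
        omega
      rw [this, pow_add]; ring
  · intro S T
    simp only [mem_filter, mem_univ, true_and]
    tauto


/-- The function `h` from the proof of Theorem 2 of the paper is nondecreasing
when an urn `u ≠ i` is queried: the increment from one more draw from `u`
equals `(1/N u)` times a nonnegative inclusion–exclusion sum. -/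
theorem h_monotone (N : V → ℕ) (hN : ∀ j, 1 ≤ N j)
    (μ : Finset V → ℝ) (hμ0 : ∀ T, 0 ≤ μ T) (hμ1 : ∑ T : Finset V, μ T = 1)
    (i u : V) (hiu : i ≠ u)
    (x : V → ℕ) (hx : ∀ j, x j ≤ N j) (hxu : x u < N u) :
    (∑ S ∈ univ.filter (fun S => i ∈ S),
          (-1 : ℝ) ^ S.card * phi μ S *
            ∏ j ∈ S \ {i}, ((x j + if j = u then 1 else 0 : ℕ) : ℝ) / (N j : ℝ)) -
        (∑ S ∈ univ.filter (fun S => i ∈ S),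
          (-1 : ℝ) ^ S.card * phi μ S * ∏ j ∈ S \ {i}, (x j : ℝ) / (N j : ℝ)) =
      (1 / (N u : ℝ)) *
        ∑ S ∈ univ.filter (fun S => ({i, u} : Finset V) ⊆ S),
          (-1 : ℝ) ^ S.card * phi μ S * ∏ j ∈ S \ {i, u}, (x j : ℝ) / (N j : ℝ) ∧
    (∑ S ∈ univ.filter (fun S => i ∈ S),
        (-1 : ℝ) ^ S.card * phi μ S * ∏ j ∈ S \ {i}, (x j : ℝ) / (N j : ℝ)) ≤
      ∑ S ∈ univ.filter (fun S => i ∈ S),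
        (-1 : ℝ) ^ S.card * phi μ S *
          ∏ j ∈ S \ {i}, ((x j + if j = u then 1 else 0 : ℕ) : ℝ) / (N j : ℝ) := by
  have hNu : (0:ℝ) < (N u : ℝ) := by exact_mod_cast Nat.lt_of_lt_of_le Nat.zero_lt_one (hN u)
  have hfilt : (univ.filter (fun S : Finset V => i ∈ S))
      = univ.filter (fun S => ({i} : Finset V) ⊆ S) := by
    ext S; simp [singleton_subset_iff]
  have hcard2 : ({i, u} : Finset V).card = 2 := by
    rw [Finset.card_insert_of_notMem (by simp [hiu]), Finset.card_singleton]
  -- nonnegativity of each term of the inner sum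
  have hterm : ∀ (s : Finset V), 0 ≤ ∏ j ∈ s, (1 - (x j : ℝ) / (N j : ℝ)) := by
    intro s
    refine Finset.prod_nonneg fun j _ => ?_
    have hNj : (0:ℝ) < (N j : ℝ) := by
      exact_mod_cast Nat.lt_of_lt_of_le Nat.zero_lt_one (hN j)
    have : (x j : ℝ) / (N j : ℝ) ≤ 1 := by
      rw [div_le_one hNj]; exact_mod_cast hx j
    linarith
  have hkey1 := key_aux μ ({i} : Finset V)
      (fun j => ((x j + if j = u then 1 else 0 : ℕ) : ℝ) / (N j : ℝ))
  have hkey2 := key_aux μ ({i} : Finset V) (fun j => (x j : ℝ) / (N j : ℝ))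
  have hkey3 := key_aux μ ({i, u} : Finset V) (fun j => (x j : ℝ) / (N j : ℝ))
  rw [Finset.card_singleton, pow_one] at hkey1 hkey2
  rw [hcard2] at hkey3
  have hBnn : 0 ≤ ∑ S ∈ univ.filter (fun S => ({i, u} : Finset V) ⊆ S),
      (-1 : ℝ) ^ S.card * phi μ S * ∏ j ∈ S \ {i, u}, (x j : ℝ) / (N j : ℝ) := by
    rw [hkey3]
    have : 0 ≤ ∑ T ∈ univ.filter (fun T => ({i, u} : Finset V) ⊆ T),
        μ T * ∏ j ∈ T \ {i, u}, (1 - (x j : ℝ) / (N j : ℝ)) :=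
      Finset.sum_nonneg fun T _ => mul_nonneg (hμ0 T) (hterm _)
    nlinarith
  have heq : (∑ S ∈ univ.filter (fun S => i ∈ S),
          (-1 : ℝ) ^ S.card * phi μ S *
            ∏ j ∈ S \ {i}, ((x j + if j = u then 1 else 0 : ℕ) : ℝ) / (N j : ℝ)) -
        (∑ S ∈ univ.filter (fun S => i ∈ S),
          (-1 : ℝ) ^ S.card * phi μ S * ∏ j ∈ S \ {i}, (x j : ℝ) / (N j : ℝ)) =
      (1 / (N u : ℝ)) *
        ∑ S ∈ univ.filter (fun S => ({i, u} : Finset V) ⊆ S),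
          (-1 : ℝ) ^ S.card * phi μ S * ∏ j ∈ S \ {i, u}, (x j : ℝ) / (N j : ℝ) := by
    rw [hfilt, hkey1, hkey2, hkey3]
    have hstep : ∀ T ∈ univ.filter (fun T => ({i} : Finset V) ⊆ T),
        μ T * ∏ j ∈ T \ {i}, (1 - (x j : ℝ) / (N j : ℝ)) -
          μ T * ∏ j ∈ T \ {i},
            (1 - ((x j + if j = u then 1 else 0 : ℕ) : ℝ) / (N j : ℝ)) =
        (1 / (N u : ℝ)) * (if u ∈ T then
            μ T * ∏ j ∈ T \ {i, u}, (1 - (x j : ℝ) / (N j : ℝ)) else 0) := by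
      intro T hT
      simp only [mem_filter, mem_univ, true_and, singleton_subset_iff] at hT
      by_cases hu : u ∈ T
      · simp only [hu, if_true]
        have hins : T \ {i} = insert u (T \ {i, u}) := by
          ext j
          simp only [mem_sdiff, mem_insert, mem_singleton]
          constructor
          · rintro ⟨hjT, hji⟩
            by_cases hj : j = u
            · exact Or.inl hj
            · exact Or.inr ⟨hjT, by tauto⟩
          · rintro (rfl | ⟨hjT, hj⟩)
            · exact ⟨hu, fun h => hiu h.symm⟩
            · exact ⟨hjT, fun h => hj (Or.inl h)⟩
        have hnm : u ∉ T \ ({i, u} : Finset V) := by simp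
        rw [hins, Finset.prod_insert hnm, Finset.prod_insert hnm]
        have hpr : ∏ j ∈ T \ ({i, u} : Finset V),
            (1 - ((x j + if j = u then 1 else 0 : ℕ) : ℝ) / (N j : ℝ)) =
            ∏ j ∈ T \ ({i, u} : Finset V), (1 - (x j : ℝ) / (N j : ℝ)) := by
          refine Finset.prod_congr rfl fun j hj => ?_
          have hju : j ≠ u := by
            simp only [mem_sdiff, mem_insert, mem_singleton] at hj
            tauto
          simp [hju]
        rw [hpr]
        have hxu' : ((x u + if u = u then 1 else 0 : ℕ) : ℝ) = (x u : ℝ) + 1 := by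
          simp
        rw [hxu']
        field_simp
        ring
      · simp only [hu, if_false, mul_zero]
        have hpr : ∏ j ∈ T \ ({i} : Finset V),
            (1 - ((x j + if j = u then 1 else 0 : ℕ) : ℝ) / (N j : ℝ)) =
            ∏ j ∈ T \ ({i} : Finset V), (1 - (x j : ℝ) / (N j : ℝ)) := by
          refine Finset.prod_congr rfl fun j hj => ?_
          have hju : j ≠ u := by
            simp only [mem_sdiff, mem_singleton] at hj
            rintro rfl; exact hu hj.1
          simp [hju]
        rw [hpr]
        ring
    calc (-1:ℝ) * ∑ T ∈ univ.filter (fun T => ({i} : Finset V) ⊆ T),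
            μ T * ∏ j ∈ T \ {i},
              (1 - ((x j + if j = u then 1 else 0 : ℕ) : ℝ) / (N j : ℝ)) -
          (-1:ℝ) * ∑ T ∈ univ.filter (fun T => ({i} : Finset V) ⊆ T),
            μ T * ∏ j ∈ T \ {i}, (1 - (x j : ℝ) / (N j : ℝ))
        = ∑ T ∈ univ.filter (fun T => ({i} : Finset V) ⊆ T),
            (μ T * ∏ j ∈ T \ {i}, (1 - (x j : ℝ) / (N j : ℝ)) -
              μ T * ∏ j ∈ T \ {i},
                (1 - ((x j + if j = u then 1 else 0 : ℕ) : ℝ) / (N j : ℝ))) := by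
          rw [Finset.sum_sub_distrib]; ring
      _ = ∑ T ∈ univ.filter (fun T => ({i} : Finset V) ⊆ T),
            (1 / (N u : ℝ)) * (if u ∈ T then
              μ T * ∏ j ∈ T \ {i, u}, (1 - (x j : ℝ) / (N j : ℝ)) else 0) :=
          Finset.sum_congr rfl hstep
      _ = (1 / (N u : ℝ)) * ∑ T ∈ univ.filter (fun T => ({i} : Finset V) ⊆ T),
            (if u ∈ T then
              μ T * ∏ j ∈ T \ {i, u}, (1 - (x j : ℝ) / (N j : ℝ)) else 0) := by
          rw [Finset.mul_sum]
      _ = (1 / (N u : ℝ)) * ((1:ℝ)^2 *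
            ∑ T ∈ univ.filter (fun T => ({i, u} : Finset V) ⊆ T),
              μ T * ∏ j ∈ T \ {i, u}, (1 - (x j : ℝ) / (N j : ℝ))) := by
          rw [Finset.sum_filter]
          congr 1
          rw [one_pow, one_mul, Finset.sum_filter]
          refine Finset.sum_congr rfl fun T _ => ?_
          by_cases h1 : i ∈ T <;> by_cases h2 : u ∈ T <;>
            simp [h1, h2, Finset.insert_subset_iff]
      _ = (1 / (N u : ℝ)) * ((-1:ℝ)^2 *
            ∑ T ∈ univ.filter (fun T => ({i, u} : Finset V) ⊆ T),
              μ T * ∏ j ∈ T \ {i, u}, (1 - (x j : ℝ) / (N j : ℝ))) := by norm_num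
  refine ⟨heq, ?_⟩
  have : 0 ≤ (1 / (N u : ℝ)) *
      ∑ S ∈ univ.filter (fun S => ({i, u} : Finset V) ⊆ S),
        (-1 : ℝ) ^ S.card * phi μ S * ∏ j ∈ S \ {i, u}, (x j : ℝ) / (N j : ℝ) :=
    mul_nonneg (by positivity) hBnn
  linarith
end
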